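/- Combining the contraction error and the biased gradient descent bound: suppose the meta-objective L(ω) is L_total-smooth and lower bounded, and at each outer step t the gradient estimate satisfies ‖g^t - ∇L(ω^t)‖ ≤ L_x D₀ (1-α)^K. Then with step size γ ∈ (0, 1/L_total], min_{0 ≤ t < T} ‖∇L(ω^t)‖² ≤ 2(L(ω^0) - L*)/(γ T) + L_x² D₀² (1-α)^{2K}. -/

import Mathlib

/-!
Along the segment from `x` to `y` the derivative of `f` deviates from `⟪∇f x, y - x⟫` by at most
`C t ‖y - x‖²`, which gives the descent lemma `f y ≤ f x + ⟪∇f x, y - x⟫ + C/2 ‖y - x‖²`.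
For a step `x - γ g` with `Cγ ≤ 1`, expanding `‖g - ∇f x‖²` turns it into a decrease of
`γ/2 ‖∇f x‖²` up to the error `γ/2 ‖g - ∇f x‖²`. Summing over `T` steps telescopes, the sum is
bounded by `L(ω⁰) - L*`, and the smallest term is at most the average.
-/

open InnerProductSpace Set

section Smooth

variable {E : Type*} [NormedAddCommGroup E] [InnerProductSpace ℝ E] [CompleteSpace E]
  {f : E → ℝ} {f' : E → E} {C : ℝ}

theorem HasGradientAt.hasDerivAt_comp_add_smul {g x v : E} {t : ℝ}
    (h : HasGradientAt f g (x + t • v)) :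
    HasDerivAt (fun s : ℝ => f (x + s • v)) ⟪g, v⟫_ℝ t := by
  have hline : HasDerivAt (fun s : ℝ => x + s • v) v t := by
    simpa using ((hasDerivAt_id t).smul_const v).const_add x
  have hcomp := h.hasFDerivAt.comp_hasDerivAt t hline
  simp only [toDual_apply_apply] at hcomp
  exact hcomp

theorem le_add_inner_add_sq_of_lipschitz_gradient (hf : ∀ z, HasGradientAt f (f' z) z)
    (hLip : ∀ z w, ‖f' z - f' w‖ ≤ C * ‖z - w‖) (x y : E) :
    f y ≤ f x + ⟪f' x, y - x⟫_ℝ + C / 2 * ‖y - x‖ ^ 2 := by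
  set v := y - x
  have hderiv (t : ℝ) : HasDerivAt (fun s : ℝ => f (x + s • v)) ⟪f' (x + t • v), v⟫_ℝ t :=
    (hf _).hasDerivAt_comp_add_smul
  have hbound (t : ℝ) (ht : 0 ≤ t) :
      ⟪f' (x + t • v), v⟫_ℝ ≤ ⟪f' x, v⟫_ℝ + C * t * ‖v‖ ^ 2 := by
    have hdist : ‖f' (x + t • v) - f' x‖ ≤ C * t * ‖v‖ := by
      simpa [norm_smul, abs_of_nonneg ht, mul_assoc] using hLip (x + t • v) x
    calc ⟪f' (x + t • v), v⟫_ℝ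
        = ⟪f' x, v⟫_ℝ + ⟪f' (x + t • v) - f' x, v⟫_ℝ := by rw [inner_sub_left]; ring
      _ ≤ ⟪f' x, v⟫_ℝ + ‖f' (x + t • v) - f' x‖ * ‖v‖ := by gcongr; exact real_inner_le_norm _ _
      _ ≤ ⟪f' x, v⟫_ℝ + C * t * ‖v‖ * ‖v‖ := by gcongr
      _ = ⟪f' x, v⟫_ℝ + C * t * ‖v‖ ^ 2 := by ring
  have hquad (t : ℝ) : HasDerivAt (fun s => f x + s * ⟪f' x, v⟫_ℝ + C / 2 * s ^ 2 * ‖v‖ ^ 2)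
      (⟪f' x, v⟫_ℝ + C * t * ‖v‖ ^ 2) t := by
    refine ((((hasDerivAt_id t).mul_const ⟪f' x, v⟫_ℝ).const_add (f x)).add
      (((hasDerivAt_pow 2 t).const_mul (C / 2)).mul_const (‖v‖ ^ 2))).congr_deriv ?_
    simp only [Nat.cast_ofNat]
    ring
  have key := image_le_of_deriv_right_le_deriv_boundary
    (fun t _ => (hderiv t).continuousAt.continuousWithinAt)
    (fun t _ => (hderiv t).hasDerivWithinAt) (by simp)
    (fun t _ => (hquad t).continuousAt.continuousWithinAt)
    (fun t _ => (hquad t).hasDerivWithinAt) (fun t ht => hbound t ht.1)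
    (right_mem_Icc.2 zero_le_one)
  simpa [v] using key

theorem le_of_inexact_gradient_step (hf : ∀ z, HasGradientAt f (f' z) z)
    (hLip : ∀ z w, ‖f' z - f' w‖ ≤ C * ‖z - w‖) {γ : ℝ} (hγ : 0 ≤ γ) (hγC : C * γ ≤ 1)
    (x g : E) :
    f (x - γ • g) ≤ f x - γ / 2 * ‖f' x‖ ^ 2 + γ / 2 * ‖g - f' x‖ ^ 2 := by
  have hdesc := le_add_inner_add_sq_of_lipschitz_gradient hf hLip x (x - γ • g)
  have hsq : ‖g - f' x‖ ^ 2 = ‖g‖ ^ 2 - 2 * ⟪f' x, g⟫_ℝ + ‖f' x‖ ^ 2 := by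
    rw [norm_sub_sq_real, real_inner_comm]
  have hcurv : C / 2 * γ ^ 2 * ‖g‖ ^ 2 ≤ γ / 2 * ‖g‖ ^ 2 := by
    have : C * γ * γ ≤ 1 * γ := mul_le_mul_of_nonneg_right hγC hγ
    nlinarith [sq_nonneg ‖g‖]
  simp only [sub_sub_cancel_left, inner_neg_right, real_inner_smul_right, norm_neg, norm_smul,
    Real.norm_eq_abs, abs_of_nonneg hγ] at hdesc
  nlinarith

end Smooth

theorem exists_le_of_sufficient_decrease {u a : ℕ → ℝ} {lb b γ : ℝ} (hγ : 0 < γ)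
    (hstep : ∀ t, u (t + 1) ≤ u t - γ / 2 * a t + γ / 2 * b) (hlb : ∀ t, lb ≤ u t)
    {T : ℕ} (hT : 0 < T) :
    ∃ t < T, a t ≤ 2 * (u 0 - lb) / (γ * T) + b := by
  have htelescope : γ / 2 * ∑ t ∈ Finset.range T, a t ≤ u 0 - u T + T * (γ / 2 * b) := by
    have := Finset.sum_le_sum fun t (_ : t ∈ Finset.range T) =>
      show γ / 2 * a t ≤ (u t - u (t + 1)) + γ / 2 * b by linarith [hstep t]
    rwa [← Finset.mul_sum, Finset.sum_add_distrib, Finset.sum_range_sub', Finset.sum_const,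
      Finset.card_range, nsmul_eq_mul] at this
  have hsum : ∑ t ∈ Finset.range T, a t
      ≤ ∑ _t ∈ Finset.range T, (2 * (u 0 - lb) / (γ * T) + b) := by
    have hT' : (T : ℝ) ≠ 0 := Nat.cast_ne_zero.2 hT.ne'
    have hrhs : (T : ℝ) * (2 * (u 0 - lb) / (γ * T) + b) = 2 * (u 0 - lb) / γ + T * b := by
      field_simp
    rw [Finset.sum_const, Finset.card_range, nsmul_eq_mul, hrhs, div_add' _ _ _ hγ.ne',
      le_div_iff₀ hγ]
    linarith [hlb T]
  obtain ⟨t, ht, hle⟩ := Finset.exists_le_of_sum_le (Finset.nonempty_range_iff.2 hT.ne') hsum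
  exact ⟨t, Finset.mem_range.1 ht, hle⟩

theorem l2e_meta_convergence_rate_general
    {m : ℕ} (L : EuclideanSpace ℝ (Fin m) → ℝ)
    (L' : EuclideanSpace ℝ (Fin m) → EuclideanSpace ℝ (Fin m))
    (hdiff : ∀ x, HasGradientAt L (L' x) x)
    (Ltotal : ℝ) (hLip : ∀ x y, ‖L' x - L' y‖ ≤ Ltotal * ‖x - y‖)
    (Lstar : ℝ) (hlb : ∀ x, Lstar ≤ L x)
    (Lx D₀ : ℝ)
    (α : ℝ) (K : ℕ)
    (γ : ℝ) (hγ : 0 < γ) (hγL : γ ≤ 1 / Ltotal)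
    (ω : ℕ → EuclideanSpace ℝ (Fin m))
    (g : ℕ → EuclideanSpace ℝ (Fin m))
    (herr : ∀ t, ‖g t - L' (ω t)‖ ≤ Lx * D₀ * (1 - α) ^ K)
    (hupd : ∀ t, ω (t + 1) = ω t - γ • g t)
    (T : ℕ) (hT : 0 < T) :
    ∃ t < T, ‖L' (ω t)‖ ^ 2
      ≤ 2 * (L (ω 0) - Lstar) / (γ * T) + Lx ^ 2 * D₀ ^ 2 * (1 - α) ^ (2 * K) := by
  have hLtotal : 0 < Ltotal := by
    by_contra! h
    linarith [one_div_nonpos.2 h]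
  have hγLtotal : Ltotal * γ ≤ 1 := by rwa [← le_div_iff₀' hLtotal]
  have hsq_err (t : ℕ) : ‖g t - L' (ω t)‖ ^ 2 ≤ Lx ^ 2 * D₀ ^ 2 * (1 - α) ^ (2 * K) := by
    rw [pow_mul', ← mul_pow, ← mul_pow]
    exact pow_le_pow_left₀ (norm_nonneg _) (herr t) 2
  refine exists_le_of_sufficient_decrease hγ (fun t => ?_) (fun t => hlb (ω t)) hT
  calc L (ω (t + 1))
      ≤ L (ω t) - γ / 2 * ‖L' (ω t)‖ ^ 2 + γ / 2 * ‖g t - L' (ω t)‖ ^ 2 := by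
        rw [hupd t]
        exact le_of_inexact_gradient_step hdiff hLip hγ.le hγLtotal (ω t) (g t)
    _ ≤ L (ω t) - γ / 2 * ‖L' (ω t)‖ ^ 2 + γ / 2 * (Lx ^ 2 * D₀ ^ 2 * (1 - α) ^ (2 * K)) := by
        gcongr
        exact hsq_err t

theorem l2e_meta_convergence_rate
    {m : ℕ} (L : EuclideanSpace ℝ (Fin m) → ℝ)
    (L' : EuclideanSpace ℝ (Fin m) → EuclideanSpace ℝ (Fin m))
    (hdiff : ∀ x, HasGradientAt L (L' x) x)
    (Ltotal : ℝ) (hLip : ∀ x y, ‖L' x - L' y‖ ≤ Ltotal * ‖x - y‖)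
    (Lstar : ℝ) (hlb : ∀ x, Lstar ≤ L x)
    (Lx D₀ : ℝ) (hLx : 0 ≤ Lx) (hD₀ : 0 ≤ D₀)
    (α : ℝ) (hα : α ∈ Set.Ioc (0 : ℝ) 1) (K : ℕ)
    (γ : ℝ) (hγ : 0 < γ) (hγL : γ ≤ 1 / Ltotal)
    (ω : ℕ → EuclideanSpace ℝ (Fin m))
    (g : ℕ → EuclideanSpace ℝ (Fin m))
    (herr : ∀ t, ‖g t - L' (ω t)‖ ≤ Lx * D₀ * (1 - α) ^ K)
    (hupd : ∀ t, ω (t + 1) = ω t - γ • g t)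
    (T : ℕ) (hT : 0 < T) :
    ∃ t < T, ‖L' (ω t)‖ ^ 2
      ≤ 2 * (L (ω 0) - Lstar) / (γ * T) + Lx ^ 2 * D₀ ^ 2 * (1 - α) ^ (2 * K) :=
  l2e_meta_convergence_rate_general L L' hdiff Ltotal hLip Lstar hlb Lx D₀ α K γ hγ hγL ω g herr
    hupd T hT
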